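/- For arbitrary smooth Walker metric functions A, B, C, the commutator [δ, D'] = δ ∘ D' − D' ∘ δ, acting on smooth functions on ℝ⁴, satisfies the identity [δ, D'] = κ̃' D − (τ + α̃ + α') D' + σ̃' T + (ρ' − ε̃' + ε') δ; equivalently, since τ + α̃ + α' = 0 and ρ' − ε̃' + ε' = 0 identically, [δ, D'] = κ̃' ∂_v + σ̃' ∂_V. -/

import Mathlib

noncomputable section

/-- Real-valued functions on ℝ⁴, with coordinates `x 0 = u`, `x 1 = v`, `x 2 = U`, `x 3 = V`. -/
abbrev Fn : Type := (Fin 4 → ℝ) → ℝ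

/-- Partial derivative in the `i`-th coordinate direction. -/
def pd (i : Fin 4) (f : Fn) : Fn :=
  fun x => lineDeriv ℝ f x (Pi.single i 1)

/-- ∂/∂u -/ def pu : Fn → Fn := pd 0
/-- ∂/∂v -/ def pv : Fn → Fn := pd 1
/-- ∂/∂U -/ def pU : Fn → Fn := pd 2
/-- ∂/∂V -/ def pV : Fn → Fn := pd 3

/-- The frame directional derivative D' = ∂_u − A ∂_v − (1/2) C ∂_V. -/
def Dp (A C : Fn) (f : Fn) : Fn :=
  fun x => pu f x - A x * pv f x - (1/2) * C x * pV f x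

/-- The frame directional derivative δ = −∂_U + B ∂_V + (1/2) C ∂_v. -/
def delta (B C : Fn) (f : Fn) : Fn :=
  fun x => -(pU f x) + B x * pV f x + (1/2) * C x * pv f x

/-- σ = −B_{,v} -/
def sigma (B : Fn) : Fn := fun x => -(pv B x)
/-- τ = (1/2) C_{,v} -/
def tau (C : Fn) : Fn := fun x => (1/2) * pv C x
/-- κ' = −A_{,V} -/
def kappa' (A : Fn) : Fn := fun x => -(pV A x)
/-- ρ' = −(1/2) C_{,V} -/
def rho' (C : Fn) : Fn := fun x => -(1/2) * pV C x
/-- ε' = (1/4) C_{,V} − (1/2) A_{,v} -/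
def eps' (A C : Fn) : Fn := fun x => (1/4) * pV C x - (1/2) * pv A x
/-- ε̃' = −(1/4) C_{,V} − (1/2) A_{,v} -/
def teps' (A C : Fn) : Fn := fun x => -(1/4) * pV C x - (1/2) * pv A x
/-- α̃ = −(1/2) B_{,V} − (1/4) C_{,v} -/
def talpha (B C : Fn) : Fn := fun x => -(1/2) * pV B x - (1/4) * pv C x
/-- α' = (1/2) B_{,V} − (1/4) C_{,v} -/
def alpha' (B C : Fn) : Fn := fun x => (1/2) * pV B x - (1/4) * pv C x

/-- κ̃' = −B A_{,V} + A_{,U} − (1/2) C A_{,v} + (1/2) A C_{,v} − (1/2) C_{,u} + (1/4) C C_{,V} -/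
def tkappa' (A B C : Fn) : Fn := fun x =>
  -(B x) * pV A x + pU A x - (1/2) * C x * pv A x + (1/2) * A x * pv C x
    - (1/2) * pu C x + (1/4) * C x * pV C x

/-- σ̃' = A B_{,v} − B_{,u} + (1/2) C B_{,V} − (1/2) B C_{,V} + (1/2) C_{,U} − (1/4) C C_{,v} -/
def tsigma' (A B C : Fn) : Fn := fun x =>
  A x * pv B x - pu B x + (1/2) * C x * pV B x - (1/2) * B x * pV C x
    + (1/2) * pU C x - (1/4) * C x * pv C x


namespace Aux

lemma pd_eq_fderiv {f : Fn} (hf : Differentiable ℝ f) (i : Fin 4) :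
    pd i f = fun x => fderiv ℝ f x (Pi.single i 1) :=
  funext fun x => (hf x).lineDeriv_eq_fderiv

lemma pd_contDiff {f : Fn} (hf : ContDiff ℝ (⊤ : ℕ∞) f) (i : Fin 4) :
    ContDiff ℝ (⊤ : ℕ∞) (pd i f) := by
  rw [pd_eq_fderiv (hf.differentiable (by simp))]
  exact (hf.fderiv_right (by simp)).clm_apply contDiff_const

lemma pd_sub {f g : Fn} (hf : ContDiff ℝ (⊤ : ℕ∞) f) (hg : ContDiff ℝ (⊤ : ℕ∞) g) (i : Fin 4) (x) :
    pd i (fun y => f y - g y) x = pd i f x - pd i g x := by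
  have hf' := (hf.differentiable (by simp)) x
  have hg' := (hg.differentiable (by simp)) x
  simp only [pd, (hf'.fun_sub hg').lineDeriv_eq_fderiv, hf'.lineDeriv_eq_fderiv,
    hg'.lineDeriv_eq_fderiv, fderiv_fun_sub hf' hg', ContinuousLinearMap.sub_apply]

lemma pd_add {f g : Fn} (hf : ContDiff ℝ (⊤ : ℕ∞) f) (hg : ContDiff ℝ (⊤ : ℕ∞) g) (i : Fin 4) (x) :
    pd i (fun y => f y + g y) x = pd i f x + pd i g x := by
  have hf' := (hf.differentiable (by simp)) x
  have hg' := (hg.differentiable (by simp)) x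
  simp only [pd, (hf'.fun_add hg').lineDeriv_eq_fderiv, hf'.lineDeriv_eq_fderiv,
    hg'.lineDeriv_eq_fderiv, fderiv_fun_add hf' hg', ContinuousLinearMap.add_apply]

lemma pd_neg {f : Fn} (hf : ContDiff ℝ (⊤ : ℕ∞) f) (i : Fin 4) (x) :
    pd i (fun y => -(f y)) x = -(pd i f x) := by
  have hf' := (hf.differentiable (by simp)) x
  simp only [pd, hf'.fun_neg.lineDeriv_eq_fderiv, hf'.lineDeriv_eq_fderiv, fderiv_fun_neg,
    ContinuousLinearMap.neg_apply]

lemma pd_mul {f g : Fn} (hf : ContDiff ℝ (⊤ : ℕ∞) f) (hg : ContDiff ℝ (⊤ : ℕ∞) g) (i : Fin 4) (x) :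
    pd i (fun y => f y * g y) x = pd i f x * g x + f x * pd i g x := by
  have hf' := (hf.differentiable (by simp)) x
  have hg' := (hg.differentiable (by simp)) x
  simp only [pd, (hf'.fun_mul hg').lineDeriv_eq_fderiv, hf'.lineDeriv_eq_fderiv,
    hg'.lineDeriv_eq_fderiv, fderiv_fun_mul hf' hg', ContinuousLinearMap.add_apply,
    ContinuousLinearMap.smul_apply, smul_eq_mul]
  ring

lemma pd_const_mul {g : Fn} (hg : ContDiff ℝ (⊤ : ℕ∞) g) (c : ℝ) (i : Fin 4) (x) :
    pd i (fun y => c * g y) x = c * pd i g x := by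
  have hg' := (hg.differentiable (by simp)) x
  simp only [pd, (hg'.const_mul c).lineDeriv_eq_fderiv, hg'.lineDeriv_eq_fderiv,
    fderiv_const_mul hg' c, ContinuousLinearMap.smul_apply, smul_eq_mul]

lemma pd_comm {f : Fn} (hf : ContDiff ℝ (⊤ : ℕ∞) f) (i j : Fin 4) (x) :
    pd i (pd j f) x = pd j (pd i f) x := by
  have hdf : Differentiable ℝ f := hf.differentiable (by simp)
  have hfd : Differentiable ℝ (fderiv ℝ f) := (hf.fderiv_right (m := (⊤ : ℕ∞)) (by simp)).differentiable (by simp)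
  have key : ∀ k l : Fin 4, pd k (pd l f) x
      = fderiv ℝ (fderiv ℝ f) x (Pi.single k 1) (Pi.single l 1) := by
    intro k l
    rw [pd_eq_fderiv hdf l, pd,
      DifferentiableAt.lineDeriv_eq_fderiv ((hfd x).clm_apply (differentiableAt_const _)),
      fderiv_clm_apply (hfd x) (differentiableAt_const _)]
    simp
  rw [key, key]
  exact (hf.contDiffAt.isSymmSndFDerivAt (by rw [minSmoothness_of_isRCLikeNormedField]; exact WithTop.coe_le_coe.mpr le_top)) _ _

lemma pd_Dp {A C f : Fn} (hA : ContDiff ℝ (⊤ : ℕ∞) A) (hC : ContDiff ℝ (⊤ : ℕ∞) C) (hf : ContDiff ℝ (⊤ : ℕ∞) f)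
    (i : Fin 4) (x) :
    pd i (Dp A C f) x =
      pd i (pd 0 f) x - (pd i A x * pd 1 f x + A x * pd i (pd 1 f) x)
        - ((1/2) * pd i C x * pd 3 f x + (1/2) * C x * pd i (pd 3 f) x) := by
  have h0 := pd_contDiff hf 0
  have h1 := pd_contDiff hf 1
  have h3 := pd_contDiff hf 3
  have e : Dp A C f = fun y => (pd 0 f y - A y * pd 1 f y) - (1/2 * C y) * pd 3 f y := rfl
  rw [e, pd_sub (h0.sub (hA.mul h1)) ((contDiff_const.mul hC).mul h3),
    pd_sub h0 (hA.mul h1), pd_mul hA h1, pd_mul (contDiff_const.mul hC) h3,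
    pd_const_mul hC (1/2)]

lemma pd_delta {B C f : Fn} (hB : ContDiff ℝ (⊤ : ℕ∞) B) (hC : ContDiff ℝ (⊤ : ℕ∞) C) (hf : ContDiff ℝ (⊤ : ℕ∞) f)
    (i : Fin 4) (x) :
    pd i (delta B C f) x =
      -(pd i (pd 2 f) x) + (pd i B x * pd 3 f x + B x * pd i (pd 3 f) x)
        + ((1/2) * pd i C x * pd 1 f x + (1/2) * C x * pd i (pd 1 f) x) := by
  have h1 := pd_contDiff hf 1
  have h2 := pd_contDiff hf 2
  have h3 := pd_contDiff hf 3
  have e : delta B C f = fun y => (-(pd 2 f y) + B y * pd 3 f y) + (1/2 * C y) * pd 1 f y := rfl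
  rw [e, pd_add (h2.neg.add (hB.mul h3)) ((contDiff_const.mul hC).mul h1),
    pd_add h2.neg (hB.mul h3), pd_neg h2, pd_mul hB h3, pd_mul (contDiff_const.mul hC) h1,
    pd_const_mul hC (1/2)]

lemma comm_eq {A B C : Fn} (hA : ContDiff ℝ (⊤ : ℕ∞) A) (hB : ContDiff ℝ (⊤ : ℕ∞) B) (hC : ContDiff ℝ (⊤ : ℕ∞) C)
    {f : Fn} (hf : ContDiff ℝ (⊤ : ℕ∞) f) (x : Fin 4 → ℝ) :
    delta B C (Dp A C f) x - Dp A C (delta B C f) x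
      = tkappa' A B C x * pd 1 f x + tsigma' A B C x * pd 3 f x := by
  have e1 : delta B C (Dp A C f) x
      = -(pd 2 (Dp A C f) x) + B x * pd 3 (Dp A C f) x + 1/2 * C x * pd 1 (Dp A C f) x := rfl
  have e2 : Dp A C (delta B C f) x
      = pd 0 (delta B C f) x - A x * pd 1 (delta B C f) x
        - 1/2 * C x * pd 3 (delta B C f) x := rfl
  rw [e1, e2, pd_Dp hA hC hf 2 x, pd_Dp hA hC hf 3 x, pd_Dp hA hC hf 1 x,
    pd_delta hB hC hf 0 x, pd_delta hB hC hf 1 x, pd_delta hB hC hf 3 x,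
    pd_comm hf 2 0 x, pd_comm hf 2 1 x, pd_comm hf 3 0 x, pd_comm hf 3 1 x,
    pd_comm hf 1 0 x, pd_comm hf 3 2 x]
  simp only [tkappa', tsigma', pu, pv, pU, pV]
  ring

end Aux

/-- the commutator [δ, D'] on smooth functions. -/
theorem stmt11 (A B C : Fn)
    (hA : ContDiff ℝ (⊤ : ℕ∞) A) (hB : ContDiff ℝ (⊤ : ℕ∞) B) (hC : ContDiff ℝ (⊤ : ℕ∞) C) :
    (∀ f : Fn, ContDiff ℝ (⊤ : ℕ∞) f → ∀ x,
      delta B C (Dp A C f) x - Dp A C (delta B C f) x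
        = tkappa' A B C x * pv f x
          - (tau C x + talpha B C x + alpha' B C x) * Dp A C f x
          + tsigma' A B C x * pV f x
          + (rho' C x - teps' A C x + eps' A C x) * delta B C f x) ∧
    (∀ x, tau C x + talpha B C x + alpha' B C x = 0) ∧
    (∀ x, rho' C x - teps' A C x + eps' A C x = 0) ∧
    (∀ f : Fn, ContDiff ℝ (⊤ : ℕ∞) f → ∀ x,
      delta B C (Dp A C f) x - Dp A C (delta B C f) x
        = tkappa' A B C x * pv f x + tsigma' A B C x * pV f x) := by
  have h2 : ∀ x, tau C x + talpha B C x + alpha' B C x = 0 := by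
    intro x; simp only [tau, talpha, alpha']; ring
  have h3 : ∀ x, rho' C x - teps' A C x + eps' A C x = 0 := by
    intro x; simp only [rho', teps', eps']; ring
  have h4 : ∀ f : Fn, ContDiff ℝ (⊤ : ℕ∞) f → ∀ x,
      delta B C (Dp A C f) x - Dp A C (delta B C f) x
        = tkappa' A B C x * pv f x + tsigma' A B C x * pV f x := by
    intro f hf x
    simpa only [pv, pV] using Aux.comm_eq hA hB hC hf x
  refine ⟨fun f hf x => ?_, h2, h3, h4⟩
  rw [h2 x, h3 x, zero_mul, zero_mul, sub_zero, add_zero]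
  exact h4 f hf x
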